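/- arXiv:1712.08292 — 4 statements merged into one kernel-verified Lean document; each statement's English description precedes it below -/
import Mathlib

section
/- Let λ ∈ (0, 1/2], f a real-valued measurable function, and Q a cube. Then ã_λ(f;Q) ≤ a_λ(f;Q) ≤ 2 ã_λ(f;Q), where a_λ(f;Q) := ((f - m_f(Q))χ_Q)^*(λ|Q|) for a median value m_f(Q), and ã_λ(f;Q) := inf over real c of ((f - c)χ_Q)^*(λ|Q|). -/
/-!
For a median `m` of `f` over `Q` and any `c`, at least half of `Q` lies on the side of `m` away
from `c`, so `|f - c| ≥ |m - c|` there. If `|(f - c)χ_Q| > α` only on a set of measure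
`< λ|Q| ≤ |Q|/2`, this forces `|m - c| ≤ α`, and then `|f - m| ≤ |f - c| + α` shows
`((f - m)χ_Q)^*(λ|Q|) ≤ 2α`. Taking the infimum over admissible `α` and over `c` gives the upper
bound; the lower bound is the choice `c = m`.
-/
open MeasureTheory Set Metric

/-- The non-increasing rearrangement of a real-valued measurable function on `ℝⁿ`. -/
noncomputable def rearr {n : ℕ} (f : (Fin n → ℝ) → ℝ) (t : ℝ) : ℝ :=
  sInf {α : ℝ | 0 < α ∧ volume {x | α < |f x|} < ENNReal.ofReal t}

/-- `m` is a median value of `f` over the set `Q`. -/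
def IsMedian {n : ℕ} (f : (Fin n → ℝ) → ℝ) (Q : Set (Fin n → ℝ)) (m : ℝ) : Prop :=
  volume {x ∈ Q | m < f x} ≤ volume Q / 2 ∧ volume {x ∈ Q | f x < m} ≤ volume Q / 2

open Filter Topology

open scoped ENNReal

section Measure

variable {α : Type*} [MeasurableSpace α] {μ : Measure α}

theorem tendsto_measure_abs_gt_atTop {g : α → ℝ} (hg : Measurable g)
    (hfin : μ (Function.support g) ≠ ∞) :
    Tendsto (fun s : ℝ => μ {x | s < |g x|}) atTop (𝓝 0) := by
  have hempty : (⋂ s : ℝ, {x | s < |g x|}) = ∅ :=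
    eq_empty_of_forall_notMem fun x hx => lt_irrefl |g x| (mem_iInter.1 hx |g x|)
  have hsupp : {x | (0 : ℝ) < |g x|} = Function.support g := by
    ext x
    simp [abs_pos]
  simpa [Function.comp_def, hempty] using tendsto_measure_iInter_atTop (μ := μ)
    (s := fun s : ℝ => {x | s < |g x|})
    (fun _ => (measurableSet_lt measurable_const hg.abs).nullMeasurableSet)
    (fun _ _ hss' _ hx => hss'.trans_lt hx) ⟨0, by rwa [hsupp]⟩

theorem half_le_measure_of_subset_union {s A B : Set α} (hs : μ s ≠ ∞) (hsAB : s ⊆ A ∪ B)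
    (hA : μ A ≤ μ s / 2) : μ s / 2 ≤ μ B := by
  have hle : μ s ≤ μ s / 2 + μ B :=
    (measure_mono hsAB).trans ((measure_union_le A B).trans (by gcongr))
  rw [← ENNReal.sub_half hs]
  exact tsub_le_iff_left.2 hle

theorem exists_pos_measure_abs_gt_lt {g : α → ℝ} (hg : Measurable g)
    (hfin : μ (Function.support g) ≠ ∞) {ε : ℝ≥0∞} (hε : 0 < ε) :
    ∃ s : ℝ, 0 < s ∧ μ {x | s < |g x|} < ε := by
  obtain ⟨s, hμ, hs⟩ := (((tendsto_measure_abs_gt_atTop hg hfin).eventually_lt_const hε).and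
    (eventually_gt_atTop 0)).exists
  exact ⟨s, hs, hμ⟩

end Measure

section Rearrangement

variable {n : ℕ} {f : (Fin n → ℝ) → ℝ} {t : ℝ}

theorem rearr_nonneg (f : (Fin n → ℝ) → ℝ) (t : ℝ) : 0 ≤ rearr f t :=
  Real.sInf_nonneg fun _ hα => hα.1.le

theorem rearr_of_nonpos (f : (Fin n → ℝ) → ℝ) (ht : t ≤ 0) : rearr f t = 0 := by
  simp [rearr, ENNReal.ofReal_of_nonpos ht]

theorem rearr_le {α : ℝ} (hα : 0 < α) (hvol : volume {x | α < |f x|} < ENNReal.ofReal t) :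
    rearr f t ≤ α :=
  csInf_le ⟨0, fun _ hβ => hβ.1.le⟩ ⟨hα, hvol⟩

end Rearrangement

namespace IsMedian

variable {n : ℕ} {f : (Fin n → ℝ) → ℝ} {Q : Set (Fin n → ℝ)} {m : ℝ}

theorem half_le_volume_ge (hm : IsMedian f Q m) (hQ : volume Q ≠ ∞) :
    volume Q / 2 ≤ volume {x ∈ Q | m ≤ f x} :=
  half_le_measure_of_subset_union (A := {x ∈ Q | f x < m}) hQ
    (fun x hx => (lt_or_ge (f x) m).imp (⟨hx, ·⟩) (⟨hx, ·⟩)) hm.2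

theorem half_le_volume_le (hm : IsMedian f Q m) (hQ : volume Q ≠ ∞) :
    volume Q / 2 ≤ volume {x ∈ Q | f x ≤ m} :=
  half_le_measure_of_subset_union (A := {x ∈ Q | m < f x}) hQ
    (fun x hx => (lt_or_ge m (f x)).imp (⟨hx, ·⟩) (⟨hx, ·⟩)) hm.1

theorem half_le_volume_abs_sub_le (hm : IsMedian f Q m) (hQ : volume Q ≠ ∞) (c : ℝ) :
    volume Q / 2 ≤ volume {x ∈ Q | |m - c| ≤ |f x - c|} := by
  rcases le_total c m with hcm | hmc
  · refine (hm.half_le_volume_ge hQ).trans (measure_mono fun x ⟨hxQ, hx⟩ => ⟨hxQ, ?_⟩)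
    rw [abs_of_nonneg (sub_nonneg.2 hcm), abs_of_nonneg (by linarith)]
    linarith
  · refine (hm.half_le_volume_le hQ).trans (measure_mono fun x ⟨hxQ, hx⟩ => ⟨hxQ, ?_⟩)
    rw [abs_of_nonpos (sub_nonpos.2 hmc), abs_of_nonpos (by linarith)]
    linarith

theorem abs_sub_le_of_volume_lt (hm : IsMedian f Q m) (hQ : volume Q ≠ ∞) {t c α : ℝ}
    (ht : ENNReal.ofReal t ≤ volume Q / 2)
    (hvol : volume {x | α < |Q.indicator (fun x => f x - c) x|} < ENNReal.ofReal t) :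
    |m - c| ≤ α := by
  by_contra! hα
  have hsub : {x ∈ Q | |m - c| ≤ |f x - c|} ⊆ {x | α < |Q.indicator (fun x => f x - c) x|} :=
    fun x ⟨hxQ, hx⟩ => by
      rw [mem_ofPred_eq, indicator_of_mem hxQ]
      exact hα.trans_le hx
  exact lt_irrefl _
    (((hm.half_le_volume_abs_sub_le hQ c).trans (measure_mono hsub)).trans_lt hvol |>.trans_le ht)

theorem rearr_indicator_sub_le (hm : IsMedian f Q m) (hf : Measurable f) (hQ : MeasurableSet Q)
    (hQfin : volume Q ≠ ∞) {t : ℝ} (ht : ENNReal.ofReal t ≤ volume Q / 2) (c : ℝ) :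
    rearr (Q.indicator fun x => f x - m) t ≤ 2 * rearr (Q.indicator fun x => f x - c) t := by
  rcases le_or_gt t 0 with ht0 | ht0
  -- for `t ≤ 0` no `α` is admissible, so both sides are `sInf ∅ = 0`
  · simp [rearr_of_nonpos _ ht0]
  have hne := exists_pos_measure_abs_gt_lt (g := Q.indicator fun x => f x - c)
    ((hf.sub measurable_const).indicator hQ)
    (ne_top_of_le_ne_top hQfin (measure_mono Set.support_indicator_subset))
    (ENNReal.ofReal_pos.2 ht0)
  rw [← div_le_iff₀' two_pos]
  refine le_csInf hne fun α ⟨hα, hvol⟩ => (div_le_iff₀' two_pos).2 ?_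
  have hmc := hm.abs_sub_le_of_volume_lt hQfin ht hvol
  refine rearr_le (by positivity) ((measure_mono fun x hx => ?_).trans_lt hvol)
  by_cases hxQ : x ∈ Q
  · simp only [mem_ofPred_eq, indicator_of_mem hxQ] at hx ⊢
    linarith [abs_sub_le (f x) c m, abs_sub_comm c m]
  · simp only [mem_ofPred_eq, indicator_of_notMem hxQ, abs_zero] at hx
    linarith

end IsMedian

theorem local_osc_median_equiv_general {n : ℕ} (lam : ℝ) (hlam : lam ∈ Set.Ioc (0 : ℝ) (1/2))
    (f : (Fin n → ℝ) → ℝ) (hf : Measurable f)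
    (cQ : Fin n → ℝ) (r : ℝ) (m : ℝ)
    (hm : IsMedian f (closedBall cQ r) m) :
    (⨅ c : ℝ, rearr ((closedBall cQ r).indicator fun x => f x - c)
        (lam * (volume (closedBall cQ r)).toReal)) ≤
      rearr ((closedBall cQ r).indicator fun x => f x - m)
        (lam * (volume (closedBall cQ r)).toReal) ∧
    rearr ((closedBall cQ r).indicator fun x => f x - m)
        (lam * (volume (closedBall cQ r)).toReal) ≤
      2 * ⨅ c : ℝ, rearr ((closedBall cQ r).indicator fun x => f x - c)
        (lam * (volume (closedBall cQ r)).toReal) := by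
  set Q := closedBall cQ r
  have hQfin : volume Q ≠ ∞ := measure_closedBall_lt_top.ne
  have ht : ENNReal.ofReal (lam * (volume Q).toReal) ≤ volume Q / 2 :=
    calc ENNReal.ofReal (lam * (volume Q).toReal)
        ≤ ENNReal.ofReal ((volume Q).toReal / 2) :=
          ENNReal.ofReal_le_ofReal (by nlinarith [hlam.2, ENNReal.toReal_nonneg (a := volume Q)])
      _ = volume Q / 2 := by
          rw [ENNReal.ofReal_div_of_pos two_pos, ENNReal.ofReal_toReal hQfin, ENNReal.ofReal_ofNat]
  have hkey := hm.rearr_indicator_sub_le hf measurableSet_closedBall hQfin ht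
  have hbdd : BddBelow (range fun c => rearr (Q.indicator fun x => f x - c)
      (lam * (volume Q).toReal)) :=
    ⟨0, forall_mem_range.2 fun _ => rearr_nonneg _ _⟩
  refine ⟨ciInf_le hbdd m, ?_⟩
  rw [← div_le_iff₀' two_pos]
  exact le_ciInf fun c => (div_le_iff₀' two_pos).2 (hkey c)

/-- For `λ ∈ (0,1/2]`, a cube `Q` (a closed sup-metric ball) and any median `m` of `f` over `Q`:
`ã_λ(f;Q) ≤ a_λ(f;Q) ≤ 2 ã_λ(f;Q)`, where `a_λ(f;Q) = ((f - m)χ_Q)^*(λ|Q|)` and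
`ã_λ(f;Q) = inf_{c ∈ ℝ} ((f - c)χ_Q)^*(λ|Q|)`. -/
theorem local_osc_median_equiv {n : ℕ} (lam : ℝ) (hlam : lam ∈ Set.Ioc (0 : ℝ) (1/2))
    (f : (Fin n → ℝ) → ℝ) (hf : Measurable f)
    (cQ : Fin n → ℝ) (r : ℝ) (hr : 0 < r) (m : ℝ)
    (hm : IsMedian f (closedBall cQ r) m) :
    (⨅ c : ℝ, rearr ((closedBall cQ r).indicator fun x => f x - c)
        (lam * (volume (closedBall cQ r)).toReal)) ≤
      rearr ((closedBall cQ r).indicator fun x => f x - m)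
        (lam * (volume (closedBall cQ r)).toReal) ∧
    rearr ((closedBall cQ r).indicator fun x => f x - m)
        (lam * (volume (closedBall cQ r)).toReal) ≤
      2 * ⨅ c : ℝ, rearr ((closedBall cQ r).indicator fun x => f x - c)
        (lam * (volume (closedBall cQ r)).toReal) :=
  local_osc_median_equiv_general lam hlam f hf cQ r m hm
end

section
/- Let λ ∈ (0, 1/2), f a real-valued measurable function, and Q, Q̃ cubes with Q̃ ⊂ Q and |Q̃| > (1/2 + λ)|Q|. Then for suitable choices of median values, |m_f(Q) - m_f(Q̃)| ≤ a_λ(f;Q), where a_λ(f;Q) := ((f - m_f(Q))χ_Q)^*(λ|Q|). -/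
open MeasureTheory Set Metric

open Filter Topology
open scoped ENNReal

/-!
Let `m` be a median of `f` on `Q̃`, `c` any constant and `a = ((f - c)χ_Q)^*(λ|Q|)`.
If `c - m > a`, then `|f - c| > a` on `{f ≤ m} ∩ Q̃`, a set of measure at least `|Q̃|/2`;
but by the definition of the rearrangement, `|(f - c)χ_Q| > a` only on a set of measure
at most `λ|Q| < |Q̃|/2`. The case `m - c > a` is symmetric. A median of `f` on a set of
finite measure is the supremum of the `t` with `|{f < t}| ≤ |Q|/2`.
-/

section LevelSets

variable {α : Type*} [MeasurableSpace α] (μ : Measure α) {f : α → ℝ}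

theorem measure_setOf_lt_le_of_forall_lt {a : ℝ} {c : ℝ≥0∞}
    (hc : ∀ b < a, μ {x | f x < b} ≤ c) : μ {x | f x < a} ≤ c := by
  obtain ⟨u, hu_mono, hu_lt, hu_tendsto⟩ := exists_seq_strictMono_tendsto a
  have hunion : {x | f x < a} = ⋃ k, {x | f x < u k} := by
    ext x
    simp only [mem_ofPred_eq, mem_iUnion]
    exact ⟨fun hx => (hu_tendsto.eventually (lt_mem_nhds hx)).exists,
      fun ⟨k, hk⟩ => hk.trans (hu_lt k)⟩
  have hmono : Monotone fun k => {x | f x < u k} :=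
    fun i j hij x hx => lt_of_lt_of_le hx (hu_mono.monotone hij)
  rw [hunion, hmono.measure_iUnion]
  exact iSup_le fun k => hc _ (hu_lt k)

theorem measure_setOf_gt_le_of_forall_gt {a : ℝ} {c : ℝ≥0∞}
    (hc : ∀ b, a < b → μ {x | b < f x} ≤ c) : μ {x | a < f x} ≤ c := by
  simpa only [neg_lt_neg_iff] using
    measure_setOf_lt_le_of_forall_lt μ (f := fun x => -f x) (a := -a) fun b hb => by
      simpa only [neg_lt] using hc (-b) (lt_neg.1 hb)

theorem tendsto_measure_setOf_gt_atTop (hf : Measurable f) {a : ℝ} (ha : μ {x | a < f x} ≠ ∞) :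
    Tendsto (fun b => μ {x | b < f x}) atTop (𝓝 0) := by
  have hempty : ⋂ b : ℝ, {x | b < f x} = ∅ :=
    eq_empty_of_forall_notMem fun x hx => lt_irrefl (f x) (mem_iInter.1 hx (f x))
  rw [← measure_empty (μ := μ), ← hempty]
  exact tendsto_measure_iInter_atTop
    (fun b => (measurableSet_lt measurable_const hf).nullMeasurableSet)
    (fun b c hbc x hx => lt_of_le_of_lt hbc hx) ⟨a, ha⟩

theorem tendsto_measure_setOf_lt_atBot (hf : Measurable f) {a : ℝ} (ha : μ {x | f x < a} ≠ ∞) :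
    Tendsto (fun b => μ {x | f x < b}) atBot (𝓝 0) := by
  have hempty : ⋂ b : ℝ, {x | f x < b} = ∅ :=
    eq_empty_of_forall_notMem fun x hx => lt_irrefl (f x) (mem_iInter.1 hx (f x))
  rw [← measure_empty (μ := μ), ← hempty]
  exact tendsto_measure_iInter_atBot
    (fun b => (measurableSet_lt hf measurable_const).nullMeasurableSet)
    (fun b c hbc x hx => lt_of_lt_of_le hx hbc) ⟨a, ha⟩

theorem tendsto_measure_setOf_lt_atTop :
    Tendsto (fun b => μ {x | f x < b}) atTop (𝓝 (μ univ)) := by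
  have hunion : ⋃ b : ℝ, {x | f x < b} = univ :=
    eq_univ_of_forall fun x => mem_iUnion.2 (exists_gt (f x))
  rw [← hunion]
  exact tendsto_measure_iUnion_atTop
    (fun b c hbc x hx => lt_of_lt_of_le hx hbc)

theorem exists_measure_gt_le_half_and_measure_lt_le_half [IsFiniteMeasure μ] (hf : Measurable f) :
    ∃ m, μ {x | m < f x} ≤ μ univ / 2 ∧ μ {x | f x < m} ≤ μ univ / 2 := by
  rcases eq_zero_or_neZero μ with rfl | hμ
  · exact ⟨0, by simp⟩
  have hhalf_pos : 0 < μ univ / 2 := ENNReal.half_pos (Measure.measure_univ_ne_zero.2 hμ.out)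
  have hhalf_lt : μ univ / 2 < μ univ :=
    ENNReal.half_lt_self (Measure.measure_univ_ne_zero.2 hμ.out) (measure_ne_top μ _)
  have hmono : Monotone fun t => μ {x | f x < t} :=
    fun s t hst => measure_mono fun x hx => lt_of_lt_of_le hx hst
  set S := {t : ℝ | μ {x | f x < t} ≤ μ univ / 2}
  obtain ⟨t₀, ht₀⟩ :=
    ((tendsto_measure_setOf_lt_atBot μ hf (measure_ne_top μ {x | f x < 0})).eventually
      (gt_mem_nhds hhalf_pos)).exists
  obtain ⟨t₁, ht₁⟩ := ((tendsto_measure_setOf_lt_atTop μ).eventually (lt_mem_nhds hhalf_lt)).exists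
  have hbdd : BddAbove S :=
    ⟨t₁, fun t ht => le_of_not_gt fun hlt => (ht₁.trans_le ((hmono hlt.le).trans ht)).false⟩
  refine ⟨sSup S, measure_setOf_gt_le_of_forall_gt μ fun b hb => ?_,
    measure_setOf_lt_le_of_forall_lt μ fun b hb => ?_⟩
  · have hbS : μ univ / 2 < μ {x | f x < b} :=
      lt_of_not_ge fun hbS => (le_csSup hbdd hbS).not_gt hb
    calc μ {x | b < f x} ≤ μ {x | f x < b}ᶜ :=
          measure_mono fun x (hx : b < f x) => not_lt.2 hx.le
      _ = μ univ - μ {x | f x < b} :=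
        measure_compl (measurableSet_lt hf measurable_const) (measure_ne_top μ _)
      _ ≤ μ univ - μ univ / 2 := tsub_le_tsub_left hbS.le _
      _ = μ univ / 2 := ENNReal.sub_half (measure_ne_top μ _)
  · obtain ⟨s, hsS, hbs⟩ := exists_lt_of_lt_csSup ⟨t₀, ht₀.le⟩ hb
    exact (hmono hbs.le).trans hsS

end LevelSets

theorem half_le_measure_sdiff {α : Type*} [MeasurableSpace α] {μ : Measure α} {s t : Set α}
    (ht : μ t ≤ μ s / 2) (hs : μ s ≠ ∞) : μ s / 2 ≤ μ (s \ t) :=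
  calc μ s / 2 = μ s - μ s / 2 := (ENNReal.sub_half hs).symm
    _ ≤ μ s - μ t := tsub_le_tsub_left ht _
    _ ≤ μ (s \ t) := le_measure_sdiff

section Cubes

variable {n : ℕ} {f : (Fin n → ℝ) → ℝ} {Q Q' : Set (Fin n → ℝ)}

theorem exists_isMedian (hf : Measurable f) (hQ : volume Q ≠ ∞) : ∃ m, IsMedian f Q m := by
  have : IsFiniteMeasure (volume.restrict Q) := isFiniteMeasure_restrict.2 hQ
  obtain ⟨m, hgt, hlt⟩ := exists_measure_gt_le_half_and_measure_lt_le_half (volume.restrict Q) hf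
  rw [Measure.restrict_apply_univ, Measure.restrict_apply (measurableSet_lt measurable_const hf),
    inter_comm] at hgt
  rw [Measure.restrict_apply_univ, Measure.restrict_apply (measurableSet_lt hf measurable_const),
    inter_comm] at hlt
  exact ⟨m, hgt, hlt⟩

theorem IsMedian.abs_sub_le {m : ℝ} (hm : IsMedian f Q m) (hQ : volume Q ≠ ∞) {c a : ℝ}
    (hsmall : volume {x ∈ Q | a < |f x - c|} < volume Q / 2) : |c - m| ≤ a := by
  rw [abs_sub_le_iff]
  constructor
  · by_contra! hlt
    refine (half_le_measure_sdiff hm.1 hQ).not_gt (lt_of_le_of_lt (measure_mono ?_) hsmall)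
    rintro x ⟨hxQ, hx⟩
    have hfx : f x ≤ m := not_lt.1 fun h => hx ⟨hxQ, h⟩
    exact ⟨hxQ, lt_abs.2 (Or.inr (by linarith))⟩
  · by_contra! hlt
    refine (half_le_measure_sdiff hm.2 hQ).not_gt (lt_of_le_of_lt (measure_mono ?_) hsmall)
    rintro x ⟨hxQ, hx⟩
    have hfx : m ≤ f x := not_lt.1 fun h => hx ⟨hxQ, h⟩
    exact ⟨hxQ, lt_abs.2 (Or.inl (by linarith))⟩

theorem volume_setOf_rearr_lt_abs_le {g : (Fin n → ℝ) → ℝ} (hg : Measurable g)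
    (hsupp : volume (Function.support g) ≠ ∞) {t : ℝ} (ht : 0 < t) :
    volume {x | rearr g t < |g x|} ≤ ENNReal.ofReal t := by
  have hfin : volume {x | 0 < |g x|} ≠ ∞ :=
    ne_top_of_le_ne_top hsupp (measure_mono fun x hx => abs_pos.1 hx)
  obtain ⟨α, hα_small, hα_pos⟩ :=
    (((tendsto_measure_setOf_gt_atTop volume hg.abs hfin).eventually
      (gt_mem_nhds (ENNReal.ofReal_pos.2 ht))).and (eventually_gt_atTop 0)).exists
  refine measure_setOf_gt_le_of_forall_gt volume fun b hb => ?_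
  have hne : {β : ℝ | 0 < β ∧ volume {x | β < |g x|} < ENNReal.ofReal t}.Nonempty :=
    ⟨α, hα_pos, hα_small⟩
  obtain ⟨β, ⟨-, hβ⟩, hβb⟩ := exists_lt_of_csInf_lt hne hb
  exact (measure_mono fun x hx => hβb.trans hx).trans hβ.le

theorem IsMedian.abs_sub_le_rearr {m c t : ℝ} (hm : IsMedian f Q' m) (hf : Measurable f)
    (hQ : MeasurableSet Q) (hQfin : volume Q ≠ ∞) (hsub : Q' ⊆ Q) (ht : 0 < t)
    (ht_half : ENNReal.ofReal t < volume Q' / 2) :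
    |c - m| ≤ rearr (Q.indicator fun x => f x - c) t := by
  have hg : Measurable (Q.indicator fun x => f x - c) := (hf.sub measurable_const).indicator hQ
  have hsupp : volume (Function.support (Q.indicator fun x => f x - c)) ≠ ∞ :=
    ne_top_of_le_ne_top hQfin (measure_mono support_indicator_subset)
  refine hm.abs_sub_le (ne_top_of_le_ne_top hQfin (measure_mono hsub)) ?_
  refine lt_of_le_of_lt ((measure_mono ?_).trans (volume_setOf_rearr_lt_abs_le hg hsupp ht)) ht_half
  rintro x ⟨hxQ', hx⟩
  rwa [mem_ofPred_eq, indicator_of_mem (hsub hxQ')]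

end Cubes

theorem median_regularity_special_general {n : ℕ} (lam : ℝ) (hlam : lam ∈ Set.Ioo (0 : ℝ) (1/2))
    (f : (Fin n → ℝ) → ℝ) (hf : Measurable f)
    (c₁ c₂ : Fin n → ℝ) (r₁ r₂ : ℝ)
    (hsub : closedBall c₂ r₂ ⊆ closedBall c₁ r₁)
    (hvol : (1/2 + lam) * (volume (closedBall c₁ r₁)).toReal <
      (volume (closedBall c₂ r₂)).toReal) :
    ∃ m₁ m₂ : ℝ, IsMedian f (closedBall c₁ r₁) m₁ ∧ IsMedian f (closedBall c₂ r₂) m₂ ∧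
      |m₁ - m₂| ≤ rearr ((closedBall c₁ r₁).indicator fun x => f x - m₁)
        (lam * (volume (closedBall c₁ r₁)).toReal) := by
  obtain ⟨hlam_pos, hlam_lt⟩ := hlam
  have hQ : volume (closedBall c₁ r₁) ≠ ∞ := measure_closedBall_lt_top.ne
  have hQ' : volume (closedBall c₂ r₂) ≠ ∞ := measure_closedBall_lt_top.ne
  have hQ'Q := ENNReal.toReal_mono hQ (measure_mono hsub)
  have hvol_pos : 0 < (volume (closedBall c₁ r₁)).toReal := by
    have : 0 ≤ (1/2 + lam) * (volume (closedBall c₁ r₁)).toReal := by positivity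
    linarith
  have ht : 0 < lam * (volume (closedBall c₁ r₁)).toReal := mul_pos hlam_pos hvol_pos
  have ht_half : ENNReal.ofReal (lam * (volume (closedBall c₁ r₁)).toReal) <
      volume (closedBall c₂ r₂) / 2 := by
    rw [ENNReal.ofReal_lt_iff_lt_toReal ht.le (ENNReal.div_ne_top hQ' two_ne_zero),
      ENNReal.toReal_div, ENNReal.toReal_ofNat]
    linarith
  obtain ⟨m₁, hm₁⟩ := exists_isMedian hf hQ
  obtain ⟨m₂, hm₂⟩ := exists_isMedian hf hQ'
  exact ⟨m₁, m₂, hm₁, hm₂,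
    hm₂.abs_sub_le_rearr hf measurableSet_closedBall hQ hsub ht ht_half⟩

/-- Let `λ ∈ (0,1/2)` and let `Q̃ ⊆ Q` be cubes (closed sup-metric balls) with
`|Q̃| > (1/2 + λ)|Q|`. Then for suitable choices of median values,
`|m_f(Q) - m_f(Q̃)| ≤ a_λ(f;Q)`. -/
theorem median_regularity_special {n : ℕ} (lam : ℝ) (hlam : lam ∈ Set.Ioo (0 : ℝ) (1/2))
    (f : (Fin n → ℝ) → ℝ) (hf : Measurable f)
    (c₁ c₂ : Fin n → ℝ) (r₁ r₂ : ℝ) (hr₁ : 0 < r₁) (hr₂ : 0 < r₂)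
    (hsub : closedBall c₂ r₂ ⊆ closedBall c₁ r₁)
    (hvol : (1/2 + lam) * (volume (closedBall c₁ r₁)).toReal <
      (volume (closedBall c₂ r₂)).toReal) :
    ∃ m₁ m₂ : ℝ, IsMedian f (closedBall c₁ r₁) m₁ ∧ IsMedian f (closedBall c₂ r₂) m₂ ∧
      |m₁ - m₂| ≤ rearr ((closedBall c₁ r₁).indicator fun x => f x - m₁)
        (lam * (volume (closedBall c₁ r₁)).toReal) :=
  median_regularity_special_general lam hlam f hf c₁ c₂ r₁ r₂ hsub hvol
end

section
/- Let λ ∈ (0, 1/2), ε > 0, f a real-valued measurable function, and Q, Q̃ cubes with Q̃ ⊂ Q. Suppose a_λ(f;P) < ε for all cubes P ⊂ Q with |P| ≥ |Q̃|. Then |m_f(Q) - m_f(Q̃)| ≤ (1 + ⌊log_{(1/2+λ)^{-1}}(|Q|/|Q̃|)⌋)·ε. -/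
open MeasureTheory Set Metric Filter

lemma exists_median {n : ℕ} (f : (Fin n → ℝ) → ℝ) (hf : Measurable f)
    (Q : Set (Fin n → ℝ)) (hQ : MeasurableSet Q) (hfin : volume Q ≠ ⊤) :
    ∃ m, IsMedian f Q m := by
  rcases eq_or_ne (volume Q) 0 with h0 | h0
  · exact ⟨0, le_trans (measure_mono (fun x hx => hx.1)) (by simp [h0]),
      le_trans (measure_mono (fun x hx => hx.1)) (by simp [h0])⟩
  have hsetmeas : ∀ t : ℝ, MeasurableSet {x ∈ Q | f x < t} := fun t =>
    hQ.inter (hf measurableSet_Iio)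
  have hsetmeas' : ∀ t : ℝ, MeasurableSet {x ∈ Q | t ≤ f x} := fun t =>
    hQ.inter (hf measurableSet_Ici)
  set V := volume Q with hV
  have hhalf : V / 2 < V := ENNReal.half_lt_self h0 hfin
  have hcompl : ∀ t : ℝ, volume {x ∈ Q | f x < t} + volume {x ∈ Q | t ≤ f x} = V := by
    intro t
    rw [← measure_union (Set.disjoint_left.2 ?_) (hsetmeas' t)]
    · congr 1
      ext x
      constructor
      · rintro (⟨h1, _⟩ | ⟨h1, _⟩) <;> exact h1
      · intro hx
        rcases lt_or_ge (f x) t with h | h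
        · exact Or.inl ⟨hx, h⟩
        · exact Or.inr ⟨hx, h⟩
    · rintro x ⟨_, h1⟩ ⟨_, h2⟩
      exact absurd h2 (not_le.2 h1)
  -- complement bound
  have hcompl_le : ∀ t : ℝ, V / 2 ≤ volume {x ∈ Q | f x < t} →
      volume {x ∈ Q | t ≤ f x} ≤ V / 2 := by
    intro t ht
    by_contra hc
    push_neg at hc
    have : V < V := by
      calc V = volume {x ∈ Q | f x < t} + volume {x ∈ Q | t ≤ f x} := (hcompl t).symm
      _ > V / 2 + V / 2 := by
          exact ENNReal.add_lt_add_of_le_of_lt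
            (ne_top_of_le_ne_top hfin ENNReal.half_le_self) ht hc
      _ = V := ENNReal.add_halves V
    exact absurd this (lt_irrefl _)
  set S := {t : ℝ | V / 2 ≤ volume {x ∈ Q | f x < t}} with hS
  have hSne : S.Nonempty := by
    have hmono : Monotone fun k : ℕ => {x ∈ Q | f x < (k : ℝ)} := fun a b hab x hx =>
      ⟨hx.1, lt_of_lt_of_le hx.2 (by exact_mod_cast hab)⟩
    have hU : (⋃ k : ℕ, {x ∈ Q | f x < (k : ℝ)}) = Q := by
      ext x
      simp only [mem_iUnion, Set.mem_sep_iff]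
      exact ⟨fun ⟨k, hk, _⟩ => hk, fun hx => (exists_nat_gt (f x)).imp fun k hk => ⟨hx, hk⟩⟩
    have htd := tendsto_measure_iUnion_atTop (μ := volume) hmono
    rw [hU] at htd
    obtain ⟨k, hk⟩ := (htd.eventually (eventually_ge_nhds hhalf)).exists
    exact ⟨k, hk⟩
  have hSbdd : BddBelow S := by
    have hanti : Antitone fun k : ℕ => {x ∈ Q | f x < -(k : ℝ)} := fun a b hab x hx =>
      ⟨hx.1, lt_of_lt_of_le hx.2 (by simp; exact_mod_cast hab)⟩
    have hI : (⋂ k : ℕ, {x ∈ Q | f x < -(k : ℝ)}) = ∅ := by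
      ext x
      simp only [mem_iInter, Set.mem_sep_iff, mem_empty_iff_false, iff_false, not_forall]
      obtain ⟨k, hk⟩ := exists_nat_gt (-f x)
      exact ⟨k, fun ⟨_, h⟩ => absurd h (by linarith)⟩
    have htd := MeasureTheory.tendsto_measure_iInter_atTop (μ := volume)
      (fun k => (hsetmeas _).nullMeasurableSet) hanti
      ⟨0, ne_top_of_le_ne_top hfin (measure_mono fun x hx => hx.1)⟩
    rw [hI] at htd
    simp only [measure_empty] at htd
    have hpos : (0 : ENNReal) < V / 2 := by
      simpa using (ENNReal.half_pos h0).bot_lt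
    obtain ⟨k, hk⟩ := (htd.eventually (eventually_lt_nhds hpos)).exists
    refine ⟨-(k : ℝ), fun t ht => ?_⟩
    by_contra hc
    push_neg at hc
    have : volume {x ∈ Q | f x < -(k:ℝ)} ≥ V / 2 :=
      le_trans ht (measure_mono fun x hx => ⟨hx.1, lt_of_lt_of_le hx.2 hc.le⟩)
    exact absurd hk (not_lt.2 this)
  set m := sInf S with hm
  refine ⟨m, ?_, ?_⟩
  · -- volume {x ∈ Q | m < f x} ≤ V/2
    have hsub : {x ∈ Q | m < f x} ⊆ ⋃ k : ℕ, {x ∈ Q | m + 1/(k+1) < f x} := by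
      intro x hx
      simp only [mem_iUnion, Set.mem_sep_iff]
      obtain ⟨k, hk⟩ := exists_nat_one_div_lt (sub_pos.2 hx.2)
      exact ⟨k, hx.1, by linarith [hk]⟩
    refine le_trans (measure_mono hsub) ?_
    have hmono : Monotone fun k : ℕ => {x ∈ Q | m + 1/((k:ℝ)+1) < f x} := by
      intro a b hab x hx
      refine ⟨hx.1, lt_of_le_of_lt ?_ hx.2⟩
      have : 1/((b:ℝ)+1) ≤ 1/((a:ℝ)+1) := by
        apply one_div_le_one_div_of_le <;> [positivity; exact_mod_cast by linarith [hab]]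
      linarith
    have htd := tendsto_measure_iUnion_atTop (μ := volume) hmono
    refine le_of_tendsto htd (Eventually.of_forall fun k => ?_)
    obtain ⟨t, htS, htlt⟩ := exists_lt_of_csInf_lt hSne (show sInf S < m + 1/((k:ℝ)+1) by
      rw [← hm]; have : (0:ℝ) < 1/((k:ℝ)+1) := by positivity
      linarith)
    refine le_trans (measure_mono fun x hx => ?_) (hcompl_le t htS)
    exact ⟨hx.1, le_of_lt (lt_trans htlt hx.2)⟩
  · -- volume {x ∈ Q | f x < m} ≤ V/2
    have hsub : {x ∈ Q | f x < m} ⊆ ⋃ k : ℕ, {x ∈ Q | f x < m - 1/(k+1)} := by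
      intro x hx
      simp only [mem_iUnion, Set.mem_sep_iff]
      obtain ⟨k, hk⟩ := exists_nat_one_div_lt (sub_pos.2 hx.2)
      exact ⟨k, hx.1, by linarith [hk]⟩
    refine le_trans (measure_mono hsub) ?_
    have hmono : Monotone fun k : ℕ => {x ∈ Q | f x < m - 1/((k:ℝ)+1)} := by
      intro a b hab x hx
      refine ⟨hx.1, lt_of_lt_of_le hx.2 ?_⟩
      have : 1/((b:ℝ)+1) ≤ 1/((a:ℝ)+1) := by
        apply one_div_le_one_div_of_le <;> [positivity; exact_mod_cast by linarith [hab]]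
      linarith
    have htd := tendsto_measure_iUnion_atTop (μ := volume) hmono
    refine le_of_tendsto htd (Eventually.of_forall fun k => ?_)
    by_contra hc
    push_neg at hc
    have hmem : m - 1/((k:ℝ)+1) ∈ S := le_of_lt hc
    have := csInf_le hSbdd hmem
    rw [← hm] at this
    have hpos : (0:ℝ) < 1/((k:ℝ)+1) := by positivity
    linarith

/-- From `rearr < eps` extract a level-set measure bound. -/
lemma osc_extract {n : ℕ} (f : (Fin n → ℝ) → ℝ) (hf : Measurable f) (m : ℝ)
    (P : Set (Fin n → ℝ)) (hP : MeasurableSet P) (hfin : volume P ≠ ⊤) (hpos : volume P ≠ 0)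
    (lam eps : ℝ) (hlam : 0 < lam) (heps : 0 < eps)
    (h : rearr (P.indicator fun x => f x - m) (lam * (volume P).toReal) < eps) :
    volume {x ∈ P | eps ≤ |f x - m|} < ENNReal.ofReal lam * volume P := by
  set g := P.indicator fun x => f x - m with hg
  have hge : ∀ α : ℝ, 0 < α → {x | α < |g x|} = {x ∈ P | α < |f x - m|} := by
    intro α hα
    ext x
    by_cases hx : x ∈ P
    · simp [hg, Set.indicator_of_mem hx, hx]
    · simp [hg, Set.indicator_of_notMem hx, hx, abs_nonneg, not_lt.2 hα.le, hα.not_gt]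
  have hrhs_pos : (0:ℝ) < lam * (volume P).toReal := by
    have := ENNReal.toReal_pos hpos hfin
    positivity
  set S := {α : ℝ | 0 < α ∧ volume {x | α < |g x|} < ENNReal.ofReal (lam * (volume P).toReal)}
    with hS
  have hSne : S.Nonempty := by
    have hanti : Antitone fun k : ℕ => {x ∈ P | (k:ℝ)+1 < |f x - m|} := by
      intro a b hab x hx
      exact ⟨hx.1, lt_of_le_of_lt (by exact_mod_cast by linarith [hab] : (a:ℝ)+1 ≤ (b:ℝ)+1) hx.2⟩
    have hI : (⋂ k : ℕ, {x ∈ P | (k:ℝ)+1 < |f x - m|}) = ∅ := by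
      ext x
      simp only [mem_iInter, Set.mem_sep_iff, mem_empty_iff_false, iff_false, not_forall]
      obtain ⟨k, hk⟩ := exists_nat_gt (|f x - m|)
      exact ⟨k, fun ⟨_, hlt⟩ => absurd hlt (by push_neg; linarith)⟩
    have hmeas : ∀ k : ℕ, MeasurableSet {x ∈ P | (k:ℝ)+1 < |f x - m|} := fun k =>
      hP.inter (((hf.sub measurable_const).abs) measurableSet_Ioi)
    have htd := MeasureTheory.tendsto_measure_iInter_atTop (μ := volume)
      (fun k => (hmeas k).nullMeasurableSet) hanti
      ⟨0, ne_top_of_le_ne_top hfin (measure_mono fun x hx => hx.1)⟩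
    rw [hI] at htd
    simp only [measure_empty] at htd
    have hpos' : (0 : ENNReal) < ENNReal.ofReal (lam * (volume P).toReal) := by
      simpa using ENNReal.ofReal_pos.2 hrhs_pos
    obtain ⟨k, hk⟩ := (htd.eventually (eventually_lt_nhds hpos')).exists
    refine ⟨(k:ℝ)+1, by positivity, ?_⟩
    rw [hge _ (by positivity)]
    exact hk
  have hex := exists_lt_of_csInf_lt hSne (show sInf S < eps from h)
  obtain ⟨α, ⟨hα0, hαvol⟩, hαeps⟩ := hex
  have hsub : {x ∈ P | eps ≤ |f x - m|} ⊆ {x | α < |g x|} := by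
    rw [hge _ hα0]
    exact fun x hx => ⟨hx.1, lt_of_lt_of_le hαeps hx.2⟩
  calc volume {x ∈ P | eps ≤ |f x - m|} ≤ volume {x | α < |g x|} := measure_mono hsub
    _ < ENNReal.ofReal (lam * (volume P).toReal) := hαvol
    _ = ENNReal.ofReal lam * volume P := by
        rw [ENNReal.ofReal_mul hlam.le, ENNReal.ofReal_toReal hfin]

/-- Median comparison between nested sets. -/
lemma median_step_s11 {n : ℕ} (f : (Fin n → ℝ) → ℝ) (m m' : ℝ) (lam eps : ℝ)
    (P P' : Set (Fin n → ℝ)) (hsub : P' ⊆ P)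
    (hfin' : volume P' ≠ ⊤)
    (hA : volume {x ∈ P | eps ≤ |f x - m|} < ENNReal.ofReal lam * volume P)
    (hvol : ENNReal.ofReal (2 * lam) * volume P ≤ volume P')
    (hm' : IsMedian f P' m') : |m' - m| ≤ eps := by
  have hAhalf : volume {x ∈ P | eps ≤ |f x - m|} < volume P' / 2 := by
    refine lt_of_lt_of_le hA ?_
    rw [ENNReal.le_div_iff_mul_le (Or.inl two_ne_zero) (Or.inr hfin')]
    calc ENNReal.ofReal lam * volume P * 2 = ENNReal.ofReal (2 * lam) * volume P := by
          rw [ENNReal.ofReal_mul zero_le_two]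
          ring_nf
          congr 1
          · norm_num [ENNReal.ofReal_ofNat]
      _ ≤ volume P' := hvol
  set A := {x ∈ P | eps ≤ |f x - m|} with hAdef
  rw [abs_le]
  constructor
  · -- -eps ≤ m' - m, i.e. ¬ (m' < m - eps)
    by_contra hc
    push_neg at hc
    have hcover : P' ⊆ A ∪ {x ∈ P' | m' < f x} := by
      intro x hx
      by_cases hxa : eps ≤ |f x - m|
      · exact Or.inl ⟨hsub hx, hxa⟩
      · push_neg at hxa
        refine Or.inr ⟨hx, ?_⟩
        have := abs_lt.1 hxa
        linarith
    have : volume P' < volume P' := by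
      calc volume P' ≤ volume A + volume {x ∈ P' | m' < f x} :=
            le_trans (measure_mono hcover) (measure_union_le _ _)
        _ < volume P' / 2 + volume P' / 2 :=
            ENNReal.add_lt_add_of_lt_of_le (ne_top_of_le_ne_top hfin' (measure_mono fun x hx => hx.1))
              hAhalf hm'.1
        _ = volume P' := ENNReal.add_halves _
    exact absurd this (lt_irrefl _)
  · -- m' - m ≤ eps
    by_contra hc
    push_neg at hc
    have hcover : P' ⊆ A ∪ {x ∈ P' | f x < m'} := by
      intro x hx
      by_cases hxa : eps ≤ |f x - m|
      · exact Or.inl ⟨hsub hx, hxa⟩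
      · push_neg at hxa
        refine Or.inr ⟨hx, ?_⟩
        have := abs_lt.1 hxa
        linarith
    have : volume P' < volume P' := by
      calc volume P' ≤ volume A + volume {x ∈ P' | f x < m'} :=
            le_trans (measure_mono hcover) (measure_union_le _ _)
        _ < volume P' / 2 + volume P' / 2 :=
            ENNReal.add_lt_add_of_lt_of_le (ne_top_of_le_ne_top hfin' (measure_mono fun x hx => hx.1))
              hAhalf hm'.2
        _ = volume P' := ENNReal.add_halves _
    exact absurd this (lt_irrefl _)

/-- Regularity of median values (Proposition 3.2): if `a_λ(f;P) < ε` for all cubes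
`P ⊆ Q` with `|P| ≥ |Q̃|` (cubes are closed sup-metric balls), then for suitable
choices of medians,
`|m_f(Q) - m_f(Q̃)| ≤ (1 + ⌊log_{(1/2+λ)⁻¹}(|Q|/|Q̃|)⌋)·ε`. -/
theorem median_regularity {n : ℕ} (lam : ℝ) (hlam : lam ∈ Set.Ioo (0 : ℝ) (1/2))
    (eps : ℝ) (heps : 0 < eps)
    (f : (Fin n → ℝ) → ℝ) (hf : Measurable f)
    (c₁ c₂ : Fin n → ℝ) (r₁ r₂ : ℝ) (hr₁ : 0 < r₁) (hr₂ : 0 < r₂)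
    (hsub : closedBall c₂ r₂ ⊆ closedBall c₁ r₁)
    (hosc : ∀ (c : Fin n → ℝ) (r : ℝ), 0 < r → closedBall c r ⊆ closedBall c₁ r₁ →
      volume (closedBall c₂ r₂) ≤ volume (closedBall c r) →
      ∀ m : ℝ, IsMedian f (closedBall c r) m →
        rearr ((closedBall c r).indicator fun x => f x - m)
          (lam * (volume (closedBall c r)).toReal) < eps) :
    ∃ m₁ m₂ : ℝ, IsMedian f (closedBall c₁ r₁) m₁ ∧ IsMedian f (closedBall c₂ r₂) m₂ ∧
      |m₁ - m₂| ≤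
        (1 + (⌊Real.logb (1/2 + lam)⁻¹
          ((volume (closedBall c₁ r₁)).toReal / (volume (closedBall c₂ r₂)).toReal)⌋ : ℝ))
          * eps := by
  obtain ⟨hlam0, hlam2⟩ := hlam
  have hvolball : ∀ (c : Fin n → ℝ) (r : ℝ), 0 ≤ r →
      volume (closedBall c r) = ENNReal.ofReal ((2*r)^n) := by
    intro c r hr
    rw [Real.volume_pi_closedBall c hr, Fintype.card_fin]
  -- case n = 0
  rcases Nat.eq_zero_or_pos n with hn | hn
  · subst hn
    have hball_univ : ∀ (c : Fin 0 → ℝ) (r : ℝ), 0 ≤ r → closedBall c r = univ := by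
      intro c r hr
      ext x
      simp [mem_closedBall, Subsingleton.elim x c, hr]
    obtain ⟨m, hm⟩ := exists_median f hf (closedBall c₁ r₁) measurableSet_closedBall
      (by rw [hvolball c₁ r₁ hr₁.le]; exact ENNReal.ofReal_ne_top)
    refine ⟨m, m, hm, ?_, ?_⟩
    · rwa [hball_univ c₂ r₂ hr₂.le, ← hball_univ c₁ r₁ hr₁.le]
    · rw [sub_self, abs_zero, hvolball c₁ r₁ hr₁.le, hvolball c₂ r₂ hr₂.le]
      simp only [pow_zero, ENNReal.ofReal_one, ENNReal.toReal_one, div_one, Real.logb_one,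
        Int.floor_zero, Int.cast_zero, add_zero, one_mul]
      exact heps.le
  -- main case : n ≥ 1
  have hnne : (n:ℝ) ≠ 0 := Nat.cast_ne_zero.2 hn.ne'
  set ρ : ℝ := (1/2 + lam)⁻¹ with hρdef
  have hbase_pos : (0:ℝ) < 1/2 + lam := by linarith
  have hbase_lt : (1:ℝ)/2 + lam < 1 := by linarith
  have hρ1 : 1 < ρ := one_lt_inv_iff₀.2 ⟨hbase_pos, hbase_lt⟩
  have hρ0 : (0:ℝ) < ρ := lt_trans one_pos hρ1
  -- coordinate bound
  have hcoord : ∀ j, |c₂ j - c₁ j| + r₂ ≤ r₁ := by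
    intro j
    set u : Fin n → ℝ := fun k => if c₁ k ≤ c₂ k then 1 else -1 with hu
    set x : Fin n → ℝ := fun k => c₂ k + r₂ * u k with hx
    have hxmem : x ∈ closedBall c₂ r₂ := by
      rw [mem_closedBall, dist_pi_le_iff hr₂.le]
      intro k
      rw [Real.dist_eq]
      have h1 : x k - c₂ k = r₂ * u k := by simp [hx]
      rw [h1, abs_mul, abs_of_nonneg hr₂.le]
      have h2 : |u k| = 1 := by
        rcases le_or_gt (c₁ k) (c₂ k) with h | h <;> simp [hu, h, not_le.2]
      rw [h2, mul_one]
    have hx1 : dist x c₁ ≤ r₁ := mem_closedBall.1 (hsub hxmem)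
    have hxj : dist (x j) (c₁ j) ≤ r₁ := le_trans (dist_le_pi_dist x c₁ j) hx1
    rw [Real.dist_eq] at hxj
    have := abs_le.1 hxj
    rcases le_or_gt (c₁ j) (c₂ j) with h | h
    · have h1 : x j = c₂ j + r₂ := by simp [hx, hu, h]
      rw [abs_of_nonneg (by linarith : (0:ℝ) ≤ c₂ j - c₁ j)]
      rw [h1] at this
      linarith [this.2]
    · have h1 : x j = c₂ j - r₂ := by simp [hx, hu, not_le.2 h]; ring
      rw [abs_of_nonpos (by linarith : c₂ j - c₁ j ≤ 0)]
      rw [h1] at this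
      linarith [this.1]
  have hr21 : r₂ ≤ r₁ := by
    have := hcoord ⟨0, hn⟩
    have := abs_nonneg (c₂ ⟨0, hn⟩ - c₁ ⟨0, hn⟩)
    linarith
  -- volumes
  set V₁ : ℝ := (2*r₁)^n with hV₁
  set V₂ : ℝ := (2*r₂)^n with hV₂
  have hV₁pos : 0 < V₁ := by positivity
  have hV₂pos : 0 < V₂ := by positivity
  have hVQ : (volume (closedBall c₁ r₁)).toReal = V₁ := by
    rw [hvolball c₁ r₁ hr₁.le, ENNReal.toReal_ofReal hV₁pos.le]
  have hVQ' : (volume (closedBall c₂ r₂)).toReal = V₂ := by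
    rw [hvolball c₂ r₂ hr₂.le, ENNReal.toReal_ofReal hV₂pos.le]
  have hratio1 : 1 ≤ V₁ / V₂ := by
    rw [le_div_iff₀ hV₂pos, one_mul]
    exact pow_le_pow_left₀ (by positivity) (by linarith) n
  set L : ℤ := ⌊Real.logb ρ (V₁/V₂)⌋ with hL
  have hL0 : 0 ≤ L := Int.floor_nonneg.2 (Real.logb_nonneg hρ1 hratio1)
  set N : ℕ := L.toNat with hN
  have hLN : (L:ℝ) = (N:ℝ) := by
    rw [hN]
    exact_mod_cast (Int.toNat_of_nonneg hL0).symm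
  have hrholow : ρ ^ (N:ℝ) ≤ V₁ / V₂ := by
    calc ρ ^ (N:ℝ) ≤ ρ ^ (Real.logb ρ (V₁/V₂)) := by
          apply Real.rpow_le_rpow_of_exponent_le hρ1.le
          rw [← hLN]
          exact Int.floor_le _
      _ = V₁ / V₂ := Real.rpow_logb hρ0 hρ1.ne' (by positivity)
  have hrhohigh : V₁ / V₂ < ρ ^ ((N:ℝ)+1) := by
    rw [← Real.logb_lt_iff_lt_rpow hρ1 (by positivity : (0:ℝ) < V₁/V₂)]
    have h := Int.lt_floor_add_one (Real.logb ρ (V₁/V₂))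
    rw [← hL] at h
    rw [← hLN]
    exact h
  -- the chain of radii
  set t : ℕ → ℝ := fun i => min (r₂ * ρ ^ ((i:ℝ)/n)) r₁ with ht
  have htpos : ∀ i, 0 < t i := fun i =>
    lt_min (by positivity) hr₁
  have htler : ∀ i, t i ≤ r₁ := fun i => min_le_right _ _
  have htmono : Monotone t := by
    intro a b hab
    apply min_le_min _ le_rfl
    apply mul_le_mul_of_nonneg_left _ hr₂.le
    apply Real.rpow_le_rpow_of_exponent_le hρ1.le
    gcongr
  have ht0 : t 0 = r₂ := by
    simp only [ht, Nat.cast_zero, zero_div, Real.rpow_zero, mul_one]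
    exact min_eq_left hr21
  have hrpow_pow : ∀ i : ℕ, (ρ ^ ((i:ℝ)/n)) ^ n = ρ ^ (i:ℝ) := by
    intro i
    rw [← Real.rpow_natCast (ρ ^ ((i:ℝ)/n)) n, ← Real.rpow_mul hρ0.le, div_mul_cancel₀ _ hnne]
  have htN1 : t (N+1) = r₁ := by
    apply min_eq_right
    rw [← div_le_iff₀' hr₂]
    apply le_of_pow_le_pow_left₀ hn.ne' (by positivity)
    have h2 : r₁^n / r₂^n = V₁ / V₂ := by
      rw [hV₁, hV₂, mul_pow, mul_pow, mul_div_mul_left _ _ (pow_ne_zero _ two_ne_zero)]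
    rw [hrpow_pow (N+1), div_pow, h2]
    push_cast
    exact hrhohigh.le
  -- real volumes of chain cubes
  set W : ℕ → ℝ := fun i => min (V₂ * ρ ^ (i:ℝ)) V₁ with hWdef
  have hWpos : ∀ i, 0 < W i := fun i => lt_min (by positivity) hV₁pos
  have hW : ∀ i, (2 * t i)^n = W i := by
    intro i
    rcases le_total (r₂ * ρ ^ ((i:ℝ)/n)) r₁ with h | h
    · rw [show t i = r₂ * ρ ^ ((i:ℝ)/n) from min_eq_left h]
      have h1 : (2 * (r₂ * ρ ^ ((i:ℝ)/n)))^n = V₂ * ρ ^ (i:ℝ) := by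
        rw [← mul_assoc, mul_pow, hrpow_pow i]
      rw [h1]
      apply (min_eq_left _).symm
      rw [← h1, hV₁]
      apply pow_le_pow_left₀ (by positivity)
      linarith
    · rw [show t i = r₁ from min_eq_right h]
      have : (2*r₁)^n = V₁ := rfl
      rw [this]
      apply (min_eq_right _).symm
      rw [hV₁, hV₂, ← hrpow_pow i, ← mul_pow]
      apply pow_le_pow_left₀ (by positivity)
      linarith
  -- centers
  set q : ℕ → (Fin n → ℝ) := fun i j => c₁ j + ((r₁ - t i)/(r₁ - r₂)) * (c₂ j - c₁ j) with hq
  have hq0 : q 0 = c₂ := by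
    funext j
    rcases eq_or_lt_of_le hr21 with h | h
    · have hc : c₂ j - c₁ j = 0 := by
        have h1 := hcoord j
        have h2 := abs_nonneg (c₂ j - c₁ j)
        have : |c₂ j - c₁ j| = 0 := by rw [← h] at h1; linarith
        exact abs_eq_zero.1 this
      simp [hq, hc]
      linarith
    · simp only [hq, ht0]
      rw [div_self (by linarith : r₁ - r₂ ≠ 0)]
      ring
  have hqN1 : q (N+1) = c₁ := by
    funext j
    simp [hq, htN1]
  -- containment of chain cubes
  have hchain : ∀ a b : ℕ, a ≤ b →
      closedBall (q a) (t a) ⊆ closedBall (q b) (t b) := by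
    intro a b hab
    apply closedBall_subset_closedBall'
    have hd : dist (q a) (q b) ≤ t b - t a := by
      rw [dist_pi_le_iff (by linarith [htmono hab] : (0:ℝ) ≤ t b - t a)]
      intro j
      rw [Real.dist_eq]
      have h1 : q a j - q b j = ((t b - t a)/(r₁ - r₂)) * (c₂ j - c₁ j) := by
        simp only [hq]
        ring
      have hba : t a ≤ t b := htmono hab
      have hconn : (0:ℝ) ≤ (t b - t a)/(r₁ - r₂) :=
        div_nonneg (by linarith) (by linarith)
      rw [h1, abs_mul, abs_of_nonneg hconn]
      calc (t b - t a)/(r₁-r₂) * |c₂ j - c₁ j| ≤ (t b - t a)/(r₁-r₂) * (r₁ - r₂) := by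
            apply mul_le_mul_of_nonneg_left _ hconn
            have := hcoord j
            linarith
        _ ≤ t b - t a := by
            rcases eq_or_lt_of_le hr21 with h | h
            · rw [← h]
              simp
              linarith
            · rw [div_mul_cancel₀ _ (by linarith : r₁ - r₂ ≠ 0)]
    linarith
  -- the chain of cubes
  set P : ℕ → Set (Fin n → ℝ) := fun i => closedBall (q i) (t i) with hP
  have hPvol : ∀ i, volume (P i) = ENNReal.ofReal (W i) := by
    intro i
    show volume (closedBall (q i) (t i)) = _
    rw [hvolball _ _ (htpos i).le, hW i]
  have hPfin : ∀ i, volume (P i) ≠ ⊤ := fun i => by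
    rw [hPvol]; exact ENNReal.ofReal_ne_top
  have hPpos : ∀ i, volume (P i) ≠ 0 := fun i => by
    rw [hPvol]
    exact (ENNReal.ofReal_pos.2 (hWpos i)).ne'
  have hPN1 : P (N+1) = closedBall c₁ r₁ := by
    show closedBall (q (N+1)) (t (N+1)) = _
    rw [hqN1, htN1]
  have hP0 : P 0 = closedBall c₂ r₂ := by
    show closedBall (q 0) (t 0) = _
    rw [hq0, ht0]
  have hPQ : ∀ i, i ≤ N+1 → P i ⊆ closedBall c₁ r₁ := by
    intro i hi
    rw [← hPN1]
    exact hchain i (N+1) hi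
  have hQ2P : ∀ i, volume (closedBall c₂ r₂) ≤ volume (P i) := by
    intro i
    rw [hPvol, hvolball c₂ r₂ hr₂.le]
    apply ENNReal.ofReal_le_ofReal
    apply le_min
    · calc V₂ = V₂ * 1 := (mul_one _).symm
        _ ≤ V₂ * ρ^(i:ℝ) := by
            apply mul_le_mul_of_nonneg_left _ hV₂pos.le
            calc (1:ℝ) = ρ^(0:ℝ) := (Real.rpow_zero ρ).symm
              _ ≤ ρ^(i:ℝ) := Real.rpow_le_rpow_of_exponent_le hρ1.le (Nat.cast_nonneg i)
    · rw [hV₁]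
      apply pow_le_pow_left₀ (by positivity)
      linarith
  have h2lr : 2*lam*ρ ≤ 1 := by
    have h1 : (1/2 + lam) * ρ = 1 := mul_inv_cancel₀ hbase_pos.ne'
    nlinarith [hρ0]
  have hstepvol : ∀ i : ℕ, ENNReal.ofReal (2*lam) * volume (P (i+1)) ≤ volume (P i) := by
    intro i
    rw [hPvol, hPvol, ← ENNReal.ofReal_mul (by positivity)]
    apply ENNReal.ofReal_le_ofReal
    have hWsucc : W (i+1) ≤ V₂ * ρ^((i:ℝ)+1) := by
      have : ((i+1:ℕ):ℝ) = (i:ℝ)+1 := by push_cast; ring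
      simp only [hWdef, this]
      exact min_le_left _ _
    apply le_min
    · calc 2*lam * W (i+1) ≤ 2*lam * (V₂ * ρ^((i:ℝ)+1)) :=
            mul_le_mul_of_nonneg_left hWsucc (by positivity)
        _ = (2*lam*ρ) * (V₂ * ρ^(i:ℝ)) := by
            rw [Real.rpow_add hρ0, Real.rpow_one]
            ring
        _ ≤ 1 * (V₂ * ρ^(i:ℝ)) := mul_le_mul_of_nonneg_right h2lr (by positivity)
        _ = V₂ * ρ^(i:ℝ) := one_mul _
    · calc 2*lam * W (i+1) ≤ 1 * V₁ := by
            apply mul_le_mul (by linarith) (min_le_right _ _) (hWpos _).le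
            norm_num
        _ = V₁ := one_mul _
  -- choose medians
  choose M hM using fun i => exists_median f hf (P i) measurableSet_closedBall (hPfin i)
  have hstep : ∀ i : ℕ, i ≤ N → |M i - M (i+1)| ≤ eps := by
    intro i hi
    have hoscP := hosc (q (i+1)) (t (i+1)) (htpos _) (hPQ (i+1) (by omega)) (hQ2P (i+1))
      (M (i+1)) (hM (i+1))
    have hA := osc_extract f hf (M (i+1)) (P (i+1)) measurableSet_closedBall (hPfin _)
      (hPpos _) lam eps hlam0 heps hoscP
    exact median_step_s11 f (M (i+1)) (M i) lam eps (P (i+1)) (P i)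
      (hchain i (i+1) (Nat.le_succ i)) (hPfin i) hA (hstepvol i) (hM i)
  have htel : ∀ k : ℕ, k ≤ N → |M 0 - M (k+1)| ≤ (k+1) * eps := by
    intro k
    induction k with
    | zero =>
        intro _
        simpa using hstep 0 (Nat.zero_le N)
    | succ k ih =>
        intro hk
        have h1 := ih (by omega)
        have h2 := hstep (k+1) (by omega)
        calc |M 0 - M (k+2)| ≤ |M 0 - M (k+1)| + |M (k+1) - M (k+2)| := abs_sub_le _ _ _
          _ ≤ (k+1)*eps + eps := add_le_add h1 h2
          _ = ((k+1:ℕ)+1:ℝ)*eps := by push_cast; ring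
  refine ⟨M (N+1), M 0, ?_, ?_, ?_⟩
  · rw [← hPN1]
    exact hM (N+1)
  · rw [← hP0]
    exact hM 0
  · rw [hVQ, hVQ', ← hL, hLN, abs_sub_comm]
    calc |M 0 - M (N+1)| ≤ ((N:ℝ)+1)*eps := htel N le_rfl
      _ = (1+(N:ℝ))*eps := by ring
end

section
/- Let f be a real-valued measurable function, λ ∈ (0,1/2), ε > 0, and Q a cube with a_λ(f;Q) < ε. If Q₁ ⊂ Q is a cube with |Q₁| = (1/2 + λ)|Q|, then |{x ∈ Q₁ : |f(x) - m_f(Q)| ≤ a_λ(f;Q)}| > |Q₁|/2, and consequently |m_f(Q) - m_f(Q₁)| ≤ a_λ(f;Q) for any median value m_f(Q₁). -/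
open MeasureTheory Set Metric

/-! Write `g = (f - m)χ_Q` and `a = a_λ(f;Q)`. The distribution function `α ↦ |{|g| > α}|` is
right-continuous, so the infimum defining `a` is attained: `|{|g| > a}| ≤ λ|Q|`. Since
`λ|Q| < (1/2 + λ)|Q|/2 = |Q₁|/2`, more than half of `Q₁` lies in `{|f - m| ≤ a}`. A median `m₁` of
`f` over `Q₁` with `|m - m₁| > a` would leave all of that set strictly on one side of `m₁`. -/

open scoped ENNReal

section DistributionFunction

variable {α : Type*} [MeasurableSpace α] {μ : Measure α} {g : α → ℝ}

theorem exists_pos_measure_lt_lt (hg : Measurable g) (hfin : μ {x | 0 < g x} ≠ ∞)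
    {ε : ℝ≥0∞} (hε : 0 < ε) : ∃ b > 0, μ {x | b < g x} < ε := by
  have hanti : Antitone fun k : ℕ => {x | (k : ℝ) < g x} := fun i j hij x (hx : (j : ℝ) < g x) =>
    show (i : ℝ) < g x from (Nat.cast_le.mpr hij).trans_lt hx
  have hempty : (⋂ k : ℕ, {x | (k : ℝ) < g x}) = ∅ := by
    refine eq_empty_of_forall_notMem fun x hx => ?_
    obtain ⟨k, hk⟩ := exists_nat_ge (g x)
    exact (mem_iInter.mp hx k).not_ge hk
  have htend := tendsto_measure_iInter_atTop
    (fun k => (measurableSet_lt measurable_const hg).nullMeasurableSet) hanti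
    ⟨0, by simpa using hfin⟩
  rw [hempty, measure_empty] at htend
  obtain ⟨k, hk, hk1⟩ := ((htend.eventually_lt_const hε).and (Filter.eventually_ge_atTop 1)).exists
  exact ⟨k, by exact_mod_cast hk1, hk⟩

theorem measure_lt_le_of_forall_gt {a : ℝ} {c : ℝ≥0∞}
    (h : ∀ b > a, μ {x | b < g x} ≤ c) : μ {x | a < g x} ≤ c := by
  have hunion : {x | a < g x} = ⋃ k : ℕ, {x | a + 1 / ((k : ℝ) + 1) < g x} := by
    ext x
    simp only [mem_ofPred_eq, mem_iUnion]
    refine ⟨fun hx => ?_, fun ⟨k, hk⟩ => lt_of_le_of_lt (le_add_of_nonneg_right (by positivity)) hk⟩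
    obtain ⟨k, hk⟩ := exists_nat_one_div_lt (sub_pos.mpr hx)
    exact ⟨k, by linarith⟩
  have hmono : Monotone fun k : ℕ => {x | a + 1 / ((k : ℝ) + 1) < g x} := fun i j hij x hx =>
    lt_of_le_of_lt (add_le_add_right (Nat.one_div_le_one_div hij) a) hx
  rw [hunion, hmono.directed_le.measure_iUnion]
  exact iSup_le fun k => h _ (lt_add_of_pos_right a Nat.one_div_pos_of_nat)

theorem measure_div_two_lt_inter {s t : Set α} (hs : μ s ≠ ∞) (h : μ (s \ t) < μ s / 2) :
    μ s / 2 < μ (s ∩ t) := by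
  by_contra! hle
  have := calc μ s ≤ μ (s ∩ t) + μ (s \ t) := measure_le_inter_add_sdiff μ s t
    _ < μ s / 2 + μ s / 2 := ENNReal.add_lt_add_of_le_of_lt
      (ne_top_of_le_ne_top hs (measure_mono inter_subset_left)) hle h
    _ = μ s := ENNReal.add_halves _
  exact this.false

end DistributionFunction

theorem measure_lt_abs_rearr_le {n : ℕ} {g : (Fin n → ℝ) → ℝ} (hg : Measurable g)
    (hfin : volume {x | 0 < |g x|} ≠ ∞) {t : ℝ} (ht : 0 < t) :
    volume {x | rearr g t < |g x|} ≤ ENNReal.ofReal t := by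
  refine measure_lt_le_of_forall_gt fun b hb => ?_
  obtain ⟨b₀, hb₀, hb₀t⟩ := exists_pos_measure_lt_lt hg.abs hfin (ENNReal.ofReal_pos.mpr ht)
  unfold rearr at hb
  obtain ⟨β, ⟨-, hβt⟩, hβb⟩ := exists_lt_of_csInf_lt (by exact ⟨b₀, hb₀, hb₀t⟩) hb
  exact (measure_mono fun x (hx : b < |g x|) => hβb.trans hx).trans hβt.le

theorem IsMedian.abs_sub_le_s12 {n : ℕ} {f : (Fin n → ℝ) → ℝ} {Q : Set (Fin n → ℝ)} {m m₁ a : ℝ}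
    (hm₁ : IsMedian f Q m₁) (h : volume Q / 2 < volume {x ∈ Q | |f x - m| ≤ a}) :
    |m - m₁| ≤ a := by
  by_contra! hlt
  rcases lt_abs.mp hlt with hgt | hgt
  · have : {x ∈ Q | |f x - m| ≤ a} ⊆ {x ∈ Q | m₁ < f x} := fun x ⟨hx, hfx⟩ =>
      ⟨hx, by linarith [(abs_le.mp hfx).1]⟩
    exact (h.trans_le ((measure_mono this).trans hm₁.1)).false
  · have : {x ∈ Q | |f x - m| ≤ a} ⊆ {x ∈ Q | f x < m₁} := fun x ⟨hx, hfx⟩ =>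
      ⟨hx, by linarith [(abs_le.mp hfx).2]⟩
    exact (h.trans_le ((measure_mono this).trans hm₁.2)).false

theorem median_step_general {n : ℕ} (lam : ℝ) (hlam : lam ∈ Set.Ioo (0 : ℝ) (1/2))
    (f : (Fin n → ℝ) → ℝ) (hf : Measurable f)
    (c : Fin n → ℝ) (r : ℝ) (hr : 0 < r) (m : ℝ)
    (c₁ : Fin n → ℝ) (r₁ : ℝ)
    (hsub : closedBall c₁ r₁ ⊆ closedBall c r)
    (hvol : (volume (closedBall c₁ r₁)).toReal =
      (1/2 + lam) * (volume (closedBall c r)).toReal) :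
    volume (closedBall c₁ r₁) / 2 <
      volume {x ∈ closedBall c₁ r₁ |
        |f x - m| ≤ rearr ((closedBall c r).indicator fun x => f x - m)
          (lam * (volume (closedBall c r)).toReal)} ∧
    ∀ m₁ : ℝ, IsMedian f (closedBall c₁ r₁) m₁ →
      |m - m₁| ≤ rearr ((closedBall c r).indicator fun x => f x - m)
        (lam * (volume (closedBall c r)).toReal) := by
  set Q := closedBall c r
  set Q₁ := closedBall c₁ r₁
  set V := (volume Q).toReal
  set g := Q.indicator fun x => f x - m
  have hV : 0 < V := ENNReal.toReal_pos (measure_closedBall_pos volume c hr).ne'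
    measure_closedBall_lt_top.ne
  have hbad : volume (Q₁ \ {x | |f x - m| ≤ rearr g (lam * V)}) ≤ ENNReal.ofReal (lam * V) := by
    have hg : Measurable g := (hf.sub measurable_const).indicator measurableSet_closedBall
    have hsupp : {x | 0 < |g x|} ⊆ Q := fun x (hx : 0 < |g x|) =>
      support_indicator_subset (abs_pos.mp hx)
    refine le_trans (measure_mono fun x ⟨hx₁, hx⟩ => ?_) (measure_lt_abs_rearr_le hg
      (ne_top_of_le_ne_top measure_closedBall_lt_top.ne (measure_mono hsupp)) (mul_pos hlam.1 hV))
    show _ < |g x|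
    rw [show g x = f x - m from indicator_of_mem (hsub hx₁) _]
    exact not_le.mp hx
  have hsmall : ENNReal.ofReal (lam * V) < volume Q₁ / 2 := by
    rw [← ENNReal.ofReal_toReal measure_closedBall_lt_top.ne, hvol, ← ENNReal.ofReal_ofNat 2,
      ← ENNReal.ofReal_div_of_pos two_pos, ENNReal.ofReal_lt_ofReal_iff (by nlinarith [hlam.1])]
    nlinarith [hlam.2]
  have hgood := measure_div_two_lt_inter measure_closedBall_lt_top.ne (hbad.trans_lt hsmall)
  exact ⟨hgood, fun m₁ hm₁ => hm₁.abs_sub_le_s12 hgood⟩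

/-- Let `λ ∈ (0,1/2)`, `ε > 0`, and `Q` a cube (closed sup-metric ball) with
`a_λ(f;Q) < ε` for a median `m` of `f` over `Q`. If `Q₁ ⊆ Q` is a cube with
`|Q₁| = (1/2 + λ)|Q|`, then `|{x ∈ Q₁ : |f x - m| ≤ a_λ(f;Q)}| > |Q₁|/2` and
`|m - m₁| ≤ a_λ(f;Q)` for every median `m₁` of `f` over `Q₁`. -/
theorem median_step {n : ℕ} (lam : ℝ) (hlam : lam ∈ Set.Ioo (0 : ℝ) (1/2))
    (eps : ℝ) (heps : 0 < eps)
    (f : (Fin n → ℝ) → ℝ) (hf : Measurable f)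
    (c : Fin n → ℝ) (r : ℝ) (hr : 0 < r) (m : ℝ)
    (hm : IsMedian f (closedBall c r) m)
    (ha : rearr ((closedBall c r).indicator fun x => f x - m)
      (lam * (volume (closedBall c r)).toReal) < eps)
    (c₁ : Fin n → ℝ) (r₁ : ℝ) (hr₁ : 0 < r₁)
    (hsub : closedBall c₁ r₁ ⊆ closedBall c r)
    (hvol : (volume (closedBall c₁ r₁)).toReal =
      (1/2 + lam) * (volume (closedBall c r)).toReal) :
    volume (closedBall c₁ r₁) / 2 <
      volume {x ∈ closedBall c₁ r₁ |
        |f x - m| ≤ rearr ((closedBall c r).indicator fun x => f x - m)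
          (lam * (volume (closedBall c r)).toReal)} ∧
    ∀ m₁ : ℝ, IsMedian f (closedBall c₁ r₁) m₁ →
      |m - m₁| ≤ rearr ((closedBall c r).indicator fun x => f x - m)
        (lam * (volume (closedBall c r)).toReal) :=
  median_step_general lam hlam f hf c r hr m c₁ r₁ hsub hvol
end
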